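/- arXiv:2003.11298 — 2 statements merged into one kernel-verified Lean document; each statement's English description precedes it below -/
import Mathlib

section
/- Let γ_1,…,γ_n ∈ ℤ² ⊂ ℝ² be the weights of the successive oriented edges along a closed path once around a 2-valent signed GKM graph. Then the angle from γ_i to γ_{i+1} (and from γ_n to γ_1) is, for all i, either always represented in (0,π) or always represented in (−π,0); that is, the sequence (γ_1,…,γ_n) is locally convex. Moreover, choosing ε ∈ {±1} such that the angles are measured in the respective interval minimizes the winding number σ(γ_1,…,γ_n,ε); this ε is the preferred orientation. -/
open Classical

namespace GKMPaper

/-- `ℤ^m`, the weight lattice. -/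
abbrev Zm (m : ℕ) := Fin m → ℤ

/-- The relation identifying a vector with its negative. -/
def pmRel (m : ℕ) (a b : Zm m) : Prop := a = b ∨ a = -b

theorem pmRel_equiv (m : ℕ) : Equivalence (pmRel m) := by
  constructor
  · intro a; exact Or.inl rfl
  · intro a b hab
    rcases hab with hh | hh
    · exact Or.inl hh.symm
    · exact Or.inr (by rw [hh, neg_neg])
  · intro a b c h1 h2
    rcases h1 with h1 | h1 <;> rcases h2 with h2 | h2
    · exact Or.inl (h1.trans h2)
    · exact Or.inr (h1.trans h2)
    · exact Or.inr (by rw [h1, h2])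
    · exact Or.inl (by rw [h1, h2, neg_neg])

def pmSetoid (m : ℕ) : Setoid (Zm m) := ⟨pmRel m, pmRel_equiv m⟩

/-- `ℤ^m / ±1`. -/
def ZmPM (m : ℕ) := Quotient (pmSetoid m)

/-- The projection `ℤ^m → ℤ^m/±1`. -/
def pm {m : ℕ} (a : Zm m) : ZmPM m := Quotient.mk (pmSetoid m) a

/-- Linear independence over `ℤ`. -/
def Indep {m : ℕ} (a b : Zm m) : Prop :=
  ∀ c d : ℤ, c • a + d • b = 0 → c = 0 ∧ d = 0

/-- An abstract graph with finite vertex and edge sets, each edge occurring with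
both orientations, and no loops. -/
structure OrGraph : Type 1 where
  V : Type
  E : Type
  fV : Fintype V
  fE : Fintype E
  dV : DecidableEq V
  dE : DecidableEq E
  src : E → V
  dst : E → V
  rev : E → E
  rev_rev : ∀ e, rev (rev e) = e
  rev_ne : ∀ e, rev e ≠ e
  src_rev : ∀ e, src (rev e) = dst e
  no_loop : ∀ e, src e ≠ dst e

attribute [instance] OrGraph.fV OrGraph.fE OrGraph.dV OrGraph.dE

/-- A connection on a graph. -/
structure Connection (G : OrGraph) where
  t : G.E → G.E → G.E
  src_t : ∀ e f, G.src f = G.src e → G.src (t e f) = G.dst e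
  t_self : ∀ e, t e e = G.rev e
  t_inv : ∀ e f, G.src f = G.src e → t (G.rev e) (t e f) = f

/-- `k`-valence. -/
def OrGraph.Regular (G : OrGraph) (k : ℕ) : Prop :=
  ∀ v : G.V, Fintype.card {e : G.E // G.src e = v} = k

def OrGraph.Adj (G : OrGraph) (v w : G.V) : Prop :=
  ∃ e, G.src e = v ∧ G.dst e = w

def OrGraph.IsConn (G : OrGraph) : Prop :=
  ∀ v w : G.V, Relation.ReflTransGen G.Adj v w

/-- Compatibility of a connection with an unsigned axial function. -/
def UnsignedCompat {m : ℕ} (G : OrGraph) (α : G.E → ZmPM m) (C : Connection G) : Prop :=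
  (∀ e f : G.E, G.src f = G.src e → e ≠ f →
      ∀ a b : Zm m, pm a = α e → pm b = α f → Indep a b) ∧
  (∀ e f : G.E, G.src f = G.src e →
      ∃ (a g : Zm m) (c : ℤ), pm a = α f ∧ pm g = α e ∧ α (C.t e f) = pm (a + c • g)) ∧
  (∀ e : G.E, α (G.rev e) = α e)

/-- `(G, α)` is an (unsigned) abstract GKM graph of valence `k` with labels in `ℤ^m/±1`. -/
def IsGKM {m : ℕ} (G : OrGraph) (k : ℕ) (α : G.E → ZmPM m) : Prop :=
  G.Regular k ∧ G.IsConn ∧ ∃ C : Connection G, UnsignedCompat G α C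

/-- Compatibility of a connection with a signed axial function. -/
def SignedCompat {m : ℕ} (G : OrGraph) (α : G.E → Zm m) (C : Connection G) : Prop :=
  (∀ e f : G.E, G.src f = G.src e → e ≠ f → Indep (α e) (α f)) ∧
  (∀ e f : G.E, G.src f = G.src e → ∃ c : ℤ, α (C.t e f) = α f + c • α e) ∧
  (∀ e : G.E, α (G.rev e) = - α e)

/-- `(G, α)` is a signed abstract GKM graph of valence `k` with labels in `ℤ^m`. -/
def IsSignedGKM {m : ℕ} (G : OrGraph) (k : ℕ) (α : G.E → Zm m) : Prop :=
  G.Regular k ∧ G.IsConn ∧ ∃ C : Connection G, SignedCompat G α C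

/-- Effectivity of an unsigned GKM graph: at every vertex, the labels of the
outgoing edges lift to a generating set of `ℤ^m`. -/
def Effective {m : ℕ} (G : OrGraph) (α : G.E → ZmPM m) : Prop :=
  ∀ v : G.V, ∃ lift : {e : G.E // G.src e = v} → Zm m,
    (∀ e, pm (lift e) = α e.1) ∧ Submodule.span ℤ (Set.range lift) = ⊤

def SignedEffective {m : ℕ} (G : OrGraph) (α : G.E → Zm m) : Prop :=
  ∀ v : G.V,
    Submodule.span ℤ (Set.range (fun e : {e : G.E // G.src e = v} => α e.1)) = ⊤

/-- A graph fibration: a morphism sending vertices to vertices and horizontal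
edges to edges, bijectively from the horizontal edges at `p` to the edges at `π(p)`. -/
structure GraphFib (G B : OrGraph) where
  onV : G.V → B.V
  onE : G.E → B.E
  src_onE : ∀ e, onV (G.src e) ≠ onV (G.dst e) → B.src (onE e) = onV (G.src e)
  dst_onE : ∀ e, onV (G.src e) ≠ onV (G.dst e) → B.dst (onE e) = onV (G.dst e)
  rev_onE : ∀ e, onV (G.src e) ≠ onV (G.dst e) → onE (G.rev e) = B.rev (onE e)

def GraphFib.Vertical {G B : OrGraph} (π : GraphFib G B) (e : G.E) : Prop :=
  π.onV (G.src e) = π.onV (G.dst e)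

def GraphFib.IsFib {G B : OrGraph} (π : GraphFib G B) : Prop :=
  ∀ p : G.V, Function.Bijective
    (fun e : {e : G.E // G.src e = p ∧ ¬ π.Vertical e} =>
      (⟨π.onE e.1, by rw [π.src_onE e.1 e.2.2, e.2.1]⟩ : {f : B.E // B.src f = π.onV p}))

/-- The extra conditions for a (unsigned) GKM fibration, w.r.t. connections `C`, `CB`. -/
def GKMFibCompat {m : ℕ} {G B : OrGraph} (αΓ : G.E → ZmPM m) (αB : B.E → ZmPM m)
    (π : GraphFib G B) (C : Connection G) (CB : Connection B) : Prop :=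
  (∀ e, ¬ π.Vertical e → αΓ e = αB (π.onE e)) ∧
  (∀ e f, G.src f = G.src e → π.Vertical f → π.Vertical (C.t e f)) ∧
  (∀ e f, G.src f = G.src e → ¬ π.Vertical e → ¬ π.Vertical f →
      ¬ π.Vertical (C.t e f) ∧ π.onE (C.t e f) = CB.t (π.onE e) (π.onE f))

/-- `π` is a GKM fibration of unsigned GKM graphs. -/
def IsGKMFib {m : ℕ} {G B : OrGraph} (αΓ : G.E → ZmPM m) (αB : B.E → ZmPM m)
    (π : GraphFib G B) : Prop :=
  π.IsFib ∧ ∃ (C : Connection G) (CB : Connection B),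
    UnsignedCompat G αΓ C ∧ UnsignedCompat B αB CB ∧ GKMFibCompat αΓ αB π C CB

def SignedGKMFibCompat {m : ℕ} {G B : OrGraph} (sΓ : G.E → Zm m) (sB : B.E → Zm m)
    (π : GraphFib G B) (C : Connection G) (CB : Connection B) : Prop :=
  (∀ e, ¬ π.Vertical e → sΓ e = sB (π.onE e)) ∧
  (∀ e f, G.src f = G.src e → π.Vertical f → π.Vertical (C.t e f)) ∧
  (∀ e f, G.src f = G.src e → ¬ π.Vertical e → ¬ π.Vertical f →
      ¬ π.Vertical (C.t e f) ∧ π.onE (C.t e f) = CB.t (π.onE e) (π.onE f))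

/-- `π` is a signed GKM fibration of signed GKM graphs. -/
def IsSignedGKMFib {m : ℕ} {G B : OrGraph} (sΓ : G.E → Zm m) (sB : B.E → Zm m)
    (π : GraphFib G B) : Prop :=
  π.IsFib ∧ ∃ (C : Connection G) (CB : Connection B),
    SignedCompat G sΓ C ∧ SignedCompat B sB CB ∧ SignedGKMFibCompat sΓ sB π C CB

/-- `(π, ft)` is a fiberwise signed fibration: `ft` is a lift of `αΓ` on the
vertical edges, satisfying the congruence condition w.r.t. suitable connections. -/
def IsFiberwiseSigned {m : ℕ} {G B : OrGraph} (αΓ : G.E → ZmPM m) (αB : B.E → ZmPM m)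
    (π : GraphFib G B) (ft : G.E → Zm m) : Prop :=
  π.IsFib ∧
  (∀ e, π.Vertical e → pm (ft e) = αΓ e) ∧
  (∀ e, π.Vertical e → ft (G.rev e) = - ft e) ∧
  ∃ (C : Connection G) (CB : Connection B),
    UnsignedCompat G αΓ C ∧ UnsignedCompat B αB CB ∧ GKMFibCompat αΓ αB π C CB ∧
    ∀ e f, G.src f = G.src e → π.Vertical f →
      ∃ (g : Zm m) (c : ℤ), pm g = αΓ e ∧ ft (C.t e f) = ft f + c • g

/-- Isomorphism of unsigned GKM graphs. -/
structure GKMIso {m : ℕ} (G : OrGraph) (α : G.E → ZmPM m)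
    (G' : OrGraph) (α' : G'.E → ZmPM m) : Type where
  fV : G.V ≃ G'.V
  fE : G.E ≃ G'.E
  φ : Zm m ≃ₗ[ℤ] Zm m
  src_comm : ∀ e, G'.src (fE e) = fV (G.src e)
  dst_comm : ∀ e, G'.dst (fE e) = fV (G.dst e)
  rev_comm : ∀ e, fE (G.rev e) = G'.rev (fE e)
  lab : ∀ (e : G.E) (a : Zm m), pm a = α e → α' (fE e) = pm (φ a)

/-- Isomorphism of signed GKM graphs. -/
structure SignedGKMIso {m : ℕ} (G : OrGraph) (α : G.E → Zm m)
    (G' : OrGraph) (α' : G'.E → Zm m) : Type where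
  fV : G.V ≃ G'.V
  fE : G.E ≃ G'.E
  φ : Zm m ≃ₗ[ℤ] Zm m
  src_comm : ∀ e, G'.src (fE e) = fV (G.src e)
  dst_comm : ∀ e, G'.dst (fE e) = fV (G.dst e)
  rev_comm : ∀ e, fE (G.rev e) = G'.rev (fE e)
  lab : ∀ e, α' (fE e) = φ (α e)

/-- Equivalence of fiberwise signed fibrations over the same base (identity on `ℤ^m`). -/
structure FSFEquiv {m : ℕ} {G B G' : OrGraph}
    (αΓ : G.E → ZmPM m) (π : GraphFib G B) (ft : G.E → Zm m)
    (αΓ' : G'.E → ZmPM m) (π' : GraphFib G' B) (ft' : G'.E → Zm m) : Type where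
  fV : G.V ≃ G'.V
  fE : G.E ≃ G'.E
  src_comm : ∀ e, G'.src (fE e) = fV (G.src e)
  dst_comm : ∀ e, G'.dst (fE e) = fV (G.dst e)
  rev_comm : ∀ e, fE (G.rev e) = G'.rev (fE e)
  lab : ∀ e, αΓ' (fE e) = αΓ e
  baseV : ∀ p, π'.onV (fV p) = π.onV p
  baseE : ∀ e, ¬ π.Vertical e → π'.onE (fE e) = π.onE e
  fiblab : ∀ e, π.Vertical e → ft' (fE e) = ft e

/-- Equivalence of signed GKM fibrations over the same base (identity on `ℤ^m`). -/
structure SFEquiv {m : ℕ} {G B G' : OrGraph}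
    (sΓ : G.E → Zm m) (π : GraphFib G B)
    (sΓ' : G'.E → Zm m) (π' : GraphFib G' B) : Type where
  fV : G.V ≃ G'.V
  fE : G.E ≃ G'.E
  src_comm : ∀ e, G'.src (fE e) = fV (G.src e)
  dst_comm : ∀ e, G'.dst (fE e) = fV (G.dst e)
  rev_comm : ∀ e, fE (G.rev e) = G'.rev (fE e)
  lab : ∀ e, sΓ' (fE e) = sΓ e
  baseV : ∀ p, π'.onV (fV p) = π.onV p
  baseE : ∀ e, ¬ π.Vertical e → π'.onE (fE e) = π.onE e

/-- Realizing `ℤ²` inside `ℝ² = ℂ`. -/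
noncomputable def toC (a : Zm 2) : ℂ := (a 0 : ℝ) + (a 1 : ℝ) * Complex.I

def cross (a b : ℂ) : ℝ := a.re * b.im - a.im * b.re

/-- A vertex of a signed GKM graph with labels in `ℤ²` is interior if the cone
spanned by the labels of the edges emanating from it is all of `ℝ²`. -/
def InteriorVtx (G : OrGraph) (α : G.E → Zm 2) (p : G.V) : Prop :=
  ∀ x : ℂ, ∃ c : G.E → ℝ, (∀ e, 0 ≤ c e) ∧
    x = ∑ e ∈ Finset.univ.filter (fun e : G.E => G.src e = p), c e • toC (α e)

/-- The angle from `w` to `w'`, represented in `[0, 2π)` if `ε = true`,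
and in `(-2π, 0]` if `ε = false`. -/
noncomputable def angTo (ε : Bool) (w w' : ℂ) : ℝ :=
  if ε then (if (w' / w).arg < 0 then (w' / w).arg + 2 * Real.pi else (w' / w).arg)
  else (if 0 < (w' / w).arg then (w' / w).arg - 2 * Real.pi else (w' / w).arg)

/-- The winding number of a cyclic sequence of vectors w.r.t. the orientation `ε`. -/
noncomputable def winding {nn : ℕ} [NeZero nn] (w : ZMod nn → ℂ) (ε : Bool) : ℝ :=
  (1 / (2 * Real.pi)) * ∑ i : ZMod nn, |angTo ε (w i) (w (i + 1))|

def LocallyConvex {nn : ℕ} (w : ZMod nn → ℂ) : Prop :=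
  (∀ i, angTo true (w i) (w (i + 1)) ∈ Set.Ioo 0 Real.pi) ∨
  (∀ i, angTo false (w i) (w (i + 1)) ∈ Set.Ioo (-Real.pi) 0)

/-- `ε` is the preferred orientation of the locally convex sequence `w`. -/
def Preferred {nn : ℕ} (w : ZMod nn → ℂ) (ε : Bool) : Prop :=
  (ε = true ∧ ∀ i, angTo true (w i) (w (i + 1)) ∈ Set.Ioo 0 Real.pi) ∨
  (ε = false ∧ ∀ i, angTo false (w i) (w (i + 1)) ∈ Set.Ioo (-Real.pi) 0)

/-- `P` lists the vertices of a strictly convex polygon in cyclic order. -/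
def ConvexCyclic {nn : ℕ} (P : ZMod nn → ℂ) : Prop :=
  (∀ i j, j ≠ i → j ≠ i + 1 → 0 < cross (P (i + 1) - P i) (P j - P i)) ∨
  (∀ i j, j ≠ i → j ≠ i + 1 → cross (P (i + 1) - P i) (P j - P i) < 0)

def SubAdj (G : OrGraph) (S : Set G.E) (v w : G.V) : Prop :=
  ∃ e ∈ S, G.src e = v ∧ G.dst e = w

/-- `S` is (the edge set of) a connected `2`-valent signed GKM subgraph of `(G, α)`. -/
def IsSigned2ValentSub (G : OrGraph) (α : G.E → Zm 2) (S : Set G.E) : Prop :=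
  S.Nonempty ∧
  (∀ e ∈ S, G.rev e ∈ S) ∧
  (∀ v : G.V, (∃ e ∈ S, G.src e = v) → Nat.card {e : G.E // e ∈ S ∧ G.src e = v} = 2) ∧
  (∀ v w : G.V, (∃ e ∈ S, G.src e = v) → (∃ e ∈ S, G.src e = w) →
      Relation.ReflTransGen (SubAdj G S) v w) ∧
  ∃ T : G.E → G.E → G.E,
    (∀ e f, e ∈ S → f ∈ S → G.src f = G.src e → T e f ∈ S ∧ G.src (T e f) = G.dst e) ∧
    (∀ e, e ∈ S → T e e = G.rev e) ∧
    (∀ e f, e ∈ S → f ∈ S → G.src f = G.src e → T (G.rev e) (T e f) = f) ∧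
    (∀ e f, e ∈ S → f ∈ S → G.src f = G.src e → ∃ c : ℤ, α (T e f) = α f + c • α e)

/-- A `2`-valent signed GKM subgraph of polytope type: it is a cycle realized by the
boundary edges of a simple convex `2`-polytope, with labels representing the slopes. -/
def IsPolytopeTypeSub (G : OrGraph) (α : G.E → Zm 2) (S : Set G.E) : Prop :=
  IsSigned2ValentSub G α S ∧
  ∃ np : ℕ, 3 ≤ np ∧
    ∃ (cyc : ZMod np → G.E) (P : ZMod np → ℂ) (t : ZMod np → ℝ),
      (∀ i, cyc i ∈ S) ∧
      (∀ ed ∈ S, ∃ i, ed = cyc i ∨ ed = G.rev (cyc i)) ∧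
      (∀ i, G.dst (cyc i) = G.src (cyc (i + 1))) ∧
      ConvexCyclic P ∧
      (∀ i, 0 < t i) ∧
      (∀ i, P (i + 1) - P i = t i • toC (α (cyc i)))

/-- A fibration over an `n`-gon base is of product type if the lifts of a path
once around the base are closed. -/
def ProductType {G B : OrGraph} (π : GraphFib G B) {nn : ℕ} (eB : ZMod nn → B.E) : Prop :=
  ∃ l : ZMod nn → G.E,
    ∀ i, ¬ π.Vertical (l i) ∧ π.onE (l i) = eB i ∧ G.dst (l i) = G.src (l (i + 1))

/-- `ℤ`-indexed `n`-gon data for a `2`-valent base graph. -/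
structure ZGonData (B : OrGraph) (n : ℕ) where
  v : ℤ → B.V
  eB : ℤ → B.E
  v_per : ∀ i, v (i + n) = v i
  e_per : ∀ i, eB (i + n) = eB i
  src_e : ∀ i, B.src (eB i) = v i
  dst_e : ∀ i, B.dst (eB i) = v (i + 1)
  v_inj : ∀ i j : ℤ, 0 ≤ i → i < n → 0 ≤ j → j < n → v i = v j → i = j
  v_surj : ∀ w : B.V, ∃ i : ℤ, v i = w
  e_cover : ∀ ed : B.E, ∃ i : ℤ, ed = eB i ∨ ed = B.rev (eB i)

/-- A choice of sign representatives `γ_i` of the base labels with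
`γ_i ≡ -γ_{i+2} (mod γ_{i+1})` for all `i ∈ ℤ`. -/
structure GammaData {B : OrGraph} {n : ℕ} (αB : B.E → ZmPM 2) (D : ZGonData B n) where
  γ : ℤ → Zm 2
  lift : ∀ i, pm (γ i) = αB (D.eB i)
  cong : ∀ i, ∃ c : ℤ, γ i + γ (i + 2) = c • γ (i + 1)

/-- A fiberwise signed `3`-valent GKM fibration over `(B, αB)`. -/
structure FSFOver (B : OrGraph) (αB : B.E → ZmPM 2) : Type 1 where
  G : OrGraph
  αΓ : G.E → ZmPM 2
  hΓ : IsGKM G 3 αΓ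
  π : GraphFib G B
  ft : G.E → Zm 2
  isfs : IsFiberwiseSigned αΓ αB π ft

def FSFOver.Equiv {B : OrGraph} {αB : B.E → ZmPM 2} (F F' : FSFOver B αB) : Prop :=
  Nonempty (FSFEquiv F.αΓ F.π F.ft F'.αΓ F'.π F'.ft)

/-- A signed `3`-valent GKM fibration over the signed graph `(B, sB)`. -/
structure SFOver (B : OrGraph) (sB : B.E → Zm 2) : Type 1 where
  G : OrGraph
  sΓ : G.E → Zm 2
  hΓ : IsSignedGKM G 3 sΓ
  π : GraphFib G B
  issf : IsSignedGKMFib sΓ sB π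

def SFOver.Equiv {B : OrGraph} {sB : B.E → Zm 2} (F F' : SFOver B sB) : Prop :=
  Nonempty (SFEquiv F.sΓ F.π F'.sΓ F'.π)

/-- The fibration `F` realizes the classification datum `([k], η)` w.r.t. the fixed data. -/
def RealizesFS {B : OrGraph} {αB : B.E → ZmPM 2} {n : ℕ} (D : ZGonData B n)
    (Γd : GammaData αB D) (F : FSFOver B αB) (k : ZMod n → ℤ) (η : Bool) : Prop :=
  (η = false ↔ ProductType F.π (fun i : ZMod n => D.eB i.val)) ∧
  ∃ (gE : ℤ → F.G.E) (αf : ℤ → Zm 2) (kk : ℤ → ℤ),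
    (∀ i, F.π.Vertical (gE i)) ∧
    (∀ i, F.π.onV (F.G.src (gE i)) = D.v i) ∧
    (∀ i, gE (i + n) = gE i ∨ gE (i + n) = F.G.rev (gE i)) ∧
    (∀ i, pm (αf i) = F.αΓ (gE i)) ∧
    (∀ i, ∃ c : ℤ, αf (i + 1) = αf i + c • Γd.γ i) ∧
    (∀ i, αf i = kk i • Γd.γ (i - 1) - kk (i - 1) • Γd.γ i) ∧
    (∀ i, kk i ≠ 0) ∧
    (∀ i : ZMod n, k i = kk i.val)

/-- The signed fibration `F` realizes the classification datum `([k], η)`. -/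
def RealizesS {B : OrGraph} (sB : B.E → Zm 2) {αB : B.E → ZmPM 2} {n : ℕ}
    (D : ZGonData B n) (Γd : GammaData αB D) (F : SFOver B sB)
    (k : ZMod n → ℤ) (η : Bool) : Prop :=
  (η = false ↔ ProductType F.π (fun i : ZMod n => D.eB i.val)) ∧
  ∃ (gE : ℤ → F.G.E) (αf : ℤ → Zm 2) (kk : ℤ → ℤ),
    (∀ i, F.π.Vertical (gE i)) ∧
    (∀ i, F.π.onV (F.G.src (gE i)) = D.v i) ∧
    (∀ i, gE (i + n) = gE i ∨ gE (i + n) = F.G.rev (gE i)) ∧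
    (∀ i, pm (αf i) = pm (F.sΓ (gE i))) ∧
    (∀ i, ∃ c : ℤ, αf (i + 1) = αf i + c • Γd.γ i) ∧
    (∀ i, αf i = kk i • Γd.γ (i - 1) - kk (i - 1) • Γd.γ i) ∧
    (∀ i, kk i ≠ 0) ∧
    (∀ i : ZMod n, k i = kk i.val)

def KRel (n : ℕ) (a b : {k : ZMod n → ℤ // ∀ i, k i ≠ 0}) : Prop :=
  a.1 = b.1 ∨ a.1 = - b.1

/-- `((ℤ∖{0})^n)/±1`. -/
def KClass (n : ℕ) := Quot (KRel n)

/-- The Section 7 setting: a signed GKM fibration of twisted type of a `3`-valent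
signed GKM graph `Γ` over `B`, the boundary of a 2-dimensional Delzant polytope with
`n` vertices, with `Γ` having `n-1` interior vertices; with the basic edges `f i`, `h i`
over `e i` and the fiber edges `g i`. -/
structure Section7 : Type 1 where
  n : ℕ
  hn : 3 ≤ n
  G : OrGraph
  B : OrGraph
  aG : G.E → Zm 2
  aB : B.E → Zm 2
  hG : IsSignedGKM G 3 aG
  hB : IsSignedGKM B 2 aB
  π : GraphFib G B
  hfib : IsSignedGKMFib aG aB π
  v : ZMod n → B.V
  e : ZMod n → B.E
  v_bij : Function.Bijective v
  src_e : ∀ i, B.src (e i) = v i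
  dst_e : ∀ i, B.dst (e i) = v (i + 1)
  e_cover : ∀ ed : B.E, ∃ i, ed = e i ∨ ed = B.rev (e i)
  P : ZMod n → ℂ
  tl : ZMod n → ℝ
  tl_pos : ∀ i, 0 < tl i
  polygon : ConvexCyclic P
  slope : ∀ i, P (i + 1) - P i = tl i • toC (aB (e i))
  delzant : ∀ i, (aB (e (i - 1)) 0) * (aB (e i) 1) - (aB (e (i - 1)) 1) * (aB (e i) 0) = 1 ∨
                 (aB (e (i - 1)) 0) * (aB (e i) 1) - (aB (e (i - 1)) 1) * (aB (e i) 0) = -1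
  f : ZMod n → G.E
  h : ZMod n → G.E
  g : ZMod n → G.E
  f_horiz : ∀ i, ¬ π.Vertical (f i)
  h_horiz : ∀ i, ¬ π.Vertical (h i)
  f_over : ∀ i, π.onE (f i) = e i
  h_over : ∀ i, π.onE (h i) = e i
  f_ne_h : ∀ i, f i ≠ h i
  g_vert : ∀ i, π.Vertical (g i)
  g_src : ∀ i, G.src (g i) = G.src (f i)
  g_dst : ∀ i, G.dst (g i) = G.src (h i)
  chain_f : ∀ i : ZMod n, i + 1 ≠ 0 → G.dst (f i) = G.src (f (i + 1))
  chain_h : ∀ i : ZMod n, i + 1 ≠ 0 → G.dst (h i) = G.src (h (i + 1))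
  twist_f : G.dst (f (-1)) = G.src (h 0)
  twist_h : G.dst (h (-1)) = G.src (f 0)
  k : ZMod n → ℤ
  k_ne : ∀ i, k i ≠ 0
  fiberweight : ∀ i, aG (g i) =
    k i • aB (e (i - 1)) - (if i = 0 then - k (i - 1) else k (i - 1)) • aB (e i)
  interior_count : Nat.card {p : G.V // InteriorVtx G aG p} = n - 1

/-- The type II signed structure: the signs of the labels of every second pair
of basic edges are reversed. -/
noncomputable def Section7.alphaII (S : Section7) : S.G.E → Zm 2 :=
  fun ed =>
    if ∃ i : ZMod S.n, Odd i.val ∧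
        (ed = S.f i ∨ ed = S.h i ∨ ed = S.G.rev (S.f i) ∨ ed = S.G.rev (S.h i))
    then - S.aG ed else S.aG ed


/-!
Along the cycle the connection at each 2-valent vertex is forced: it carries the incoming edge
`c (i+1)` past `rev (c i)` onto `c (i+2)`, so `γ_{i+2} ≡ -γ_i (mod γ_{i+1})`. Hence
`det (γ_i, γ_{i+1})` does not depend on `i`, and it is nonzero because the two edges at a vertex
have independent weights. All turning angles therefore have the sign of this determinant, which is
local convexity. For the orientation of that sign every angle has absolute value `< π`, for the
other one `> π`, so the preferred orientation minimizes the winding number term by term.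

Backtracking `c (i+1) = rev (c i)` would make the cycle have at most two vertices; a single vertex
carries a loop, and two vertices joined by two edges `e ≠ f` are impossible since the connection
would give `-α f ≡ α f (mod α e)`.
-/

theorem ZMod.eq_or_eq_add_one_of_two_eq_zero {n : ℕ} (h : (2 : ZMod n) = 0) (i j : ZMod n) :
    j = i ∨ j = i + 1 := by
  have hdvd : n ∣ 2 := (ZMod.natCast_eq_zero_iff 2 n).1 (by exact_mod_cast h)
  rcases (Nat.dvd_prime Nat.prime_two).1 hdvd with rfl | rfl <;> revert i j <;> decide

theorem ZMod.apply_eq_apply_zero_of_forall_add_one {n : ℕ} {β : Type*} {f : ZMod n → β}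
    (h : ∀ i, f (i + 1) = f i) (i : ZMod n) : f i = f 0 := by
  obtain ⟨k, rfl⟩ := ZMod.intCast_surjective i
  induction k using Int.induction_on with
  | zero => simp
  | succ k ih => rw [Int.cast_add, Int.cast_one, h, ih]
  | pred k ih => rw [← ih, ← h]; congr 1; push_cast; ring

section Determinant

def det2 (a b : Zm 2) : ℤ := a 0 * b 1 - a 1 * b 0

theorem det2_neg_left (a b : Zm 2) : det2 (-a) b = -det2 a b := by
  simp only [det2, Pi.neg_apply]; ring

theorem det2_neg_add_smul (a b : Zm 2) (d : ℤ) : det2 b (-a + d • b) = det2 a b := by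
  simp only [det2, Pi.add_apply, Pi.neg_apply, Pi.smul_apply, smul_eq_mul]; ring

theorem Indep.det2_ne_zero {a b : Zm 2} (h : Indep a b) : det2 a b ≠ 0 := by
  intro hdet
  have hdet : a 0 * b 1 = a 1 * b 0 := sub_eq_zero.1 hdet
  have hrel : ∀ i : Fin 2, b i • a + (-a i) • b = 0 := by
    intro i
    funext j
    simp only [Pi.add_apply, Pi.smul_apply, smul_eq_mul, Pi.zero_apply]
    fin_cases i <;> fin_cases j <;> simp only [Fin.zero_eta, Fin.mk_one] <;> linarith
  have ha : a = 0 := funext fun i => neg_eq_zero.1 (h _ _ (hrel i)).2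
  exact one_ne_zero (h 1 0 (by simp [ha])).1

theorem cross_toC (a b : Zm 2) : cross (toC a) (toC b) = det2 a b := by
  simp only [cross, toC, det2, Complex.add_re, Complex.ofReal_re, Complex.mul_re,
    Complex.I_re, Complex.I_im, Complex.ofReal_im, Complex.add_im, Complex.mul_im]
  push_cast
  ring

end Determinant

section Angles

open Complex Real

theorem im_div_eq_cross_div_normSq (w w' : ℂ) : (w' / w).im = cross w w' / normSq w := by
  rw [div_im]; unfold cross; ring

theorem normSq_pos_of_cross_ne_zero {w w' : ℂ} (h : cross w w' ≠ 0) : 0 < normSq w :=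
  normSq_pos.2 fun hw => h (by simp [cross, hw])

theorem angTo_true_mem_Ioo_of_cross_pos {w w' : ℂ} (h : 0 < cross w w') :
    angTo true w w' ∈ Set.Ioo 0 π := by
  have him : 0 < (w' / w).im := by
    rw [im_div_eq_cross_div_normSq]
    exact div_pos h (normSq_pos_of_cross_ne_zero h.ne')
  have harg : 0 ≤ (w' / w).arg := arg_nonneg_iff.2 him.le
  simp only [angTo, if_true, if_neg (not_lt.2 harg)]
  refine ⟨harg.lt_of_ne fun h0 => ?_, (arg_le_pi _).lt_of_ne fun hpi => ?_⟩
  · linarith [(arg_eq_zero_iff.1 h0.symm).2]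
  · linarith [(arg_eq_pi_iff.1 hpi).2]

theorem angTo_false_mem_Ioo_of_cross_neg {w w' : ℂ} (h : cross w w' < 0) :
    angTo false w w' ∈ Set.Ioo (-π) 0 := by
  have him : (w' / w).im < 0 := by
    rw [im_div_eq_cross_div_normSq]
    exact div_neg_of_neg_of_pos h (normSq_pos_of_cross_ne_zero h.ne)
  have harg : (w' / w).arg < 0 := arg_neg_iff.2 him
  simp only [angTo, Bool.false_eq_true, if_false, if_neg (not_lt.2 harg.le)]
  exact ⟨neg_pi_lt_arg _, harg⟩

theorem abs_angTo_true_le {w w' : ℂ} (h : angTo true w w' ∈ Set.Ioo 0 π) (ε : Bool) :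
    |angTo true w w'| ≤ |angTo ε w w'| := by
  have harg : 0 < (w' / w).arg := by
    by_cases hneg : (w' / w).arg < 0
    · simp only [angTo, if_true, if_pos hneg] at h
      linarith [h.2, neg_pi_lt_arg (w' / w)]
    · simp only [angTo, if_true, if_neg hneg] at h
      exact h.1
  have htrue : angTo true w w' = (w' / w).arg := by
    simp only [angTo, if_true, if_neg (not_lt.2 harg.le)]
  rw [htrue] at h ⊢
  cases ε with
  | true => rw [htrue]
  | false =>
    simp only [angTo, Bool.false_eq_true, if_false, if_pos harg]
    rw [abs_of_pos harg, abs_of_neg (by linarith [h.2])]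
    linarith [h.2]

theorem abs_angTo_false_le {w w' : ℂ} (h : angTo false w w' ∈ Set.Ioo (-π) 0) (ε : Bool) :
    |angTo false w w'| ≤ |angTo ε w w'| := by
  have harg : (w' / w).arg < 0 := by
    by_cases hpos : 0 < (w' / w).arg
    · simp only [angTo, Bool.false_eq_true, if_false, if_pos hpos] at h
      linarith [h.1, arg_le_pi (w' / w)]
    · simp only [angTo, Bool.false_eq_true, if_false, if_neg hpos] at h
      exact h.2
  have hfalse : angTo false w w' = (w' / w).arg := by
    simp only [angTo, Bool.false_eq_true, if_false, if_neg (not_lt.2 harg.le)]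
  rw [hfalse] at h ⊢
  cases ε with
  | false => rw [hfalse]
  | true =>
    simp only [angTo, if_true, if_pos harg]
    rw [abs_of_neg harg, abs_of_pos (by linarith [h.1])]
    linarith [h.1]

theorem locallyConvex_of_cross_eq {n : ℕ} {w : ZMod n → ℂ} {D : ℝ} (hD : D ≠ 0)
    (h : ∀ i, cross (w i) (w (i + 1)) = D) : LocallyConvex w := by
  rcases hD.lt_or_gt with hneg | hpos
  · exact Or.inr fun i => angTo_false_mem_Ioo_of_cross_neg (h i ▸ hneg)
  · exact Or.inl fun i => angTo_true_mem_Ioo_of_cross_pos (h i ▸ hpos)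

theorem winding_le_of_preferred {n : ℕ} [NeZero n] {w : ZMod n → ℂ} {ε : Bool}
    (hε : Preferred w ε) (ε' : Bool) : winding w ε ≤ winding w ε' := by
  refine mul_le_mul_of_nonneg_left (Finset.sum_le_sum fun i _ => ?_) (by positivity)
  rcases hε with ⟨rfl, hall⟩ | ⟨rfl, hall⟩
  · exact abs_angTo_true_le (hall i) ε'
  · exact abs_angTo_false_le (hall i) ε'

end Angles

section TwoValent

variable {G : OrGraph}

theorem OrGraph.dst_rev (e : G.E) : G.dst (G.rev e) = G.src e := by
  rw [← G.src_rev, G.rev_rev]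

theorem OrGraph.rev_injective : Function.Injective G.rev :=
  Function.LeftInverse.injective G.rev_rev

theorem Connection.t_injOn (C : Connection G) {e f f' : G.E} (hf : G.src f = G.src e)
    (hf' : G.src f' = G.src e) (h : C.t e f = C.t e f') : f = f' := by
  rw [← C.t_inv e f hf, ← C.t_inv e f' hf', h]

theorem OrGraph.Regular.exists_ne (hreg : G.Regular 2) (e : G.E) :
    ∃ f, G.src f = G.src e ∧ f ≠ e := by
  have hcard : 1 < Fintype.card {f : G.E // G.src f = G.src e} := by rw [hreg]; omega
  obtain ⟨⟨f, hf⟩, hne⟩ := Fintype.exists_ne_of_one_lt_card hcard ⟨e, rfl⟩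
  exact ⟨f, hf, fun h => hne (Subtype.ext h)⟩

theorem OrGraph.Regular.eq_or_eq (hreg : G.Regular 2) {v : G.V} {a b g : G.E}
    (ha : G.src a = v) (hb : G.src b = v) (hg : G.src g = v) (hab : a ≠ b) :
    g = a ∨ g = b := by
  by_contra! hne
  have h3 : 2 < Fintype.card {e : G.E // G.src e = v} :=
    Fintype.two_lt_card_iff.2 ⟨⟨a, ha⟩, ⟨b, hb⟩, ⟨g, hg⟩,
      fun h => hab (congrArg Subtype.val h), fun h => hne.1 (congrArg Subtype.val h).symm,
      fun h => hne.2 (congrArg Subtype.val h).symm⟩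
  rw [hreg v] at h3
  omega

theorem Connection.t_eq_of_regular_two (hreg : G.Regular 2) (C : Connection G) {e f g : G.E}
    (hf : G.src f = G.src e) (hfe : f ≠ e) (hg : G.src g = G.dst e) (hge : g ≠ G.rev e) :
    C.t e f = g := by
  have hne : C.t e f ≠ G.rev e := fun h =>
    hfe (C.t_injOn hf rfl (h.trans (C.t_self e).symm))
  rcases hreg.eq_or_eq (G.src_rev e) hg (C.src_t e f hf) hge.symm with h | h
  · exact absurd h hne
  · exact h

variable {m : ℕ} {α : G.E → Zm m} {C : Connection G}

theorem SignedCompat.exists_label_eq_of_regular_two (hreg : G.Regular 2)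
    (hC : SignedCompat G α C) {e f g : G.E} (hf : G.src f = G.src e) (hfe : f ≠ e)
    (hg : G.src g = G.dst e) (hge : g ≠ G.rev e) : ∃ d : ℤ, α g = α f + d • α e := by
  rw [← C.t_eq_of_regular_two hreg hf hfe hg hge]
  exact hC.2.1 e f hf

theorem SignedCompat.eq_of_src_eq_of_dst_eq (hreg : G.Regular 2) (hC : SignedCompat G α C)
    {e f : G.E} (hs : G.src f = G.src e) (hd : G.dst f = G.dst e) : f = e := by
  by_contra hfe
  obtain ⟨d, hlabel⟩ := hC.exists_label_eq_of_regular_two hreg hs hfe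
    (by rw [G.src_rev, hd]) (fun h => hfe (OrGraph.rev_injective h))
  rw [hC.2.2 f] at hlabel
  have hzero : d • α e + (2 : ℤ) • α f = 0 := by
    rw [two_smul]; linear_combination -hlabel
  exact two_ne_zero (hC.1 e f hs (Ne.symm hfe) d 2 hzero).2

end TwoValent

section HamiltonianCycle

variable {G : OrGraph} {α : G.E → Zm 2} {C : Connection G} {n : ℕ}
  {p : ZMod n → G.V} {c : ZMod n → G.E}

theorem cycle_succ_ne_rev (hreg : G.Regular 2) (hC : SignedCompat G α C)
    (hpinj : Function.Injective p) (hpsurj : Function.Surjective p)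
    (hsrc : ∀ i, G.src (c i) = p i) (hdst : ∀ i, G.dst (c i) = p (i + 1)) (i : ZMod n) :
    c (i + 1) ≠ G.rev (c i) := by
  intro hback
  have hp : p (i + 1 + 1) = p i := by rw [← hdst, hback, G.dst_rev, hsrc]
  have htwo : (2 : ZMod n) = 0 := by linear_combination hpinj hp
  obtain ⟨f, hf, hfc⟩ := hreg.exists_ne (c i)
  obtain ⟨j, hj⟩ := hpsurj (G.dst f)
  rcases ZMod.eq_or_eq_add_one_of_two_eq_zero htwo i j with rfl | rfl
  · exact G.no_loop f (by rw [hf, hsrc, hj])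
  · exact hfc (hC.eq_of_src_eq_of_dst_eq hreg hf (by rw [← hj, hdst]))

theorem cycle_det2_ne_zero (hreg : G.Regular 2) (hC : SignedCompat G α C)
    (hpinj : Function.Injective p) (hpsurj : Function.Surjective p)
    (hsrc : ∀ i, G.src (c i) = p i) (hdst : ∀ i, G.dst (c i) = p (i + 1)) (i : ZMod n) :
    det2 (α (c i)) (α (c (i + 1))) ≠ 0 := by
  have hindep := hC.1 (G.rev (c i)) (c (i + 1)) (by rw [hsrc, G.src_rev, hdst])
    (cycle_succ_ne_rev hreg hC hpinj hpsurj hsrc hdst i).symm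
  rw [hC.2.2] at hindep
  simpa [det2_neg_left] using hindep.det2_ne_zero

theorem cycle_det2_succ (hreg : G.Regular 2) (hC : SignedCompat G α C)
    (hpinj : Function.Injective p) (hpsurj : Function.Surjective p)
    (hsrc : ∀ i, G.src (c i) = p i) (hdst : ∀ i, G.dst (c i) = p (i + 1)) (i : ZMod n) :
    det2 (α (c (i + 1))) (α (c (i + 1 + 1))) = det2 (α (c i)) (α (c (i + 1))) := by
  have hback := cycle_succ_ne_rev hreg hC hpinj hpsurj hsrc hdst
  obtain ⟨d, hd⟩ := hC.exists_label_eq_of_regular_two hreg (e := c (i + 1)) (f := G.rev (c i))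
    (by rw [hsrc, G.src_rev, hdst]) (hback i).symm (by rw [hsrc, hdst]) (hback (i + 1))
  rw [hd, hC.2.2, det2_neg_add_smul]

end HamiltonianCycle


/-- the weights along a closed path once around a 2-valent signed GKM
graph form a locally convex sequence, and the preferred orientation minimizes the
winding number. -/
theorem statement12 (G : OrGraph) (α : G.E → Zm 2) (hG : IsSignedGKM G 2 α)
    (nn : ℕ) [NeZero nn]
    (p : ZMod nn → G.V) (c : ZMod nn → G.E)
    (hpinj : Function.Injective p) (hpsurj : Function.Surjective p)
    (hsrc : ∀ i, G.src (c i) = p i) (hdst : ∀ i, G.dst (c i) = p (i + 1)) :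
    LocallyConvex (fun i => toC (α (c i))) ∧
    ∀ ε : Bool, Preferred (fun i => toC (α (c i))) ε →
      ∀ ε' : Bool,
        winding (fun i => toC (α (c i))) ε ≤ winding (fun i => toC (α (c i))) ε' := by
  obtain ⟨hreg, -, C, hC⟩ := hG
  have hconst : ∀ i, det2 (α (c i)) (α (c (i + 1))) = det2 (α (c 0)) (α (c (0 + 1))) :=
    ZMod.apply_eq_apply_zero_of_forall_add_one (f := fun i => det2 (α (c i)) (α (c (i + 1))))
      (cycle_det2_succ hreg hC hpinj hpsurj hsrc hdst)
  refine ⟨locallyConvex_of_cross_eq ?_ fun i => by rw [cross_toC, hconst i],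
    fun ε hε ε' => winding_le_of_preferred hε ε'⟩
  exact_mod_cast cycle_det2_ne_zero hreg hC hpinj hpsurj hsrc hdst 0

end GKMPaper
end

section
/- If (γ_1,…,γ_n) is a locally convex sequence of nonzero vectors in ℝ² with preferred orientation ε and n is even, then the winding numbers satisfy σ(γ_1,γ_3,…,γ_{n−1},ε) = σ(γ_1,γ_2,…,γ_n,ε). -/
open Classical

/-! Local convexity puts every angle `η_i` strictly inside `(0, π)` (or `(-π, 0)`), so the angle
from `γ_i` to `γ_{i+2}` is `η_i + η_{i+1}`: the two agree modulo `2π`, and both lie in the window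
of length `2π` in which `angTo` takes its values. Grouping the terms of `σ(γ_1, …, γ_n, ε)` in
consecutive pairs then gives `σ(γ_1, γ_3, …, γ_{n-1}, ε)`. -/

open Real

lemma Real.Angle.eq_of_coe_eq_of_abs_sub_lt {x y : ℝ} (h : (x : Angle) = y)
    (hxy : |x - y| < 2 * π) : x = y := by
  obtain ⟨k, hk⟩ := Angle.angle_eq_iff_two_pi_dvd_sub.mp h
  rw [hk, abs_mul, abs_of_pos two_pi_pos] at hxy
  have hk_abs : |(k : ℝ)| < 1 := lt_of_mul_lt_mul_left (by linarith) two_pi_pos.le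
  have hk0 : k = 0 := Int.abs_lt_one_iff.mp (by exact_mod_cast hk_abs)
  simpa [hk0, sub_eq_zero] using hk

lemma ZMod.sum_univ_eq_sum_range {M : Type*} [AddCommMonoid M] {n : ℕ} [NeZero n]
    (f : ZMod n → M) : ∑ i, f i = ∑ i ∈ Finset.range n, f i := by
  refine Finset.sum_nbij' ZMod.val (↑) (fun i _ => Finset.mem_range.mpr i.val_lt)
    (fun _ _ => Finset.mem_univ _) (fun i _ => ZMod.natCast_zmod_val i)
    (fun i hi => ZMod.val_cast_of_lt (Finset.mem_range.mp hi)) (fun i _ => ?_)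
  rw [ZMod.natCast_zmod_val]

lemma Finset.sum_range_two_mul {M : Type*} [AddCommMonoid M] (f : ℕ → M) (n : ℕ) :
    ∑ i ∈ range (2 * n), f i = ∑ j ∈ range n, (f (2 * j) + f (2 * j + 1)) := by
  induction n with
  | zero => simp
  | succ n ih =>
    rw [mul_add, mul_one, sum_range_succ, sum_range_succ, sum_range_succ, ih, add_assoc]

lemma ZMod.sum_two_mul {M : Type*} [AddCommMonoid M] {n : ℕ} [NeZero n]
    (f : ZMod (2 * n) → M) :
    ∑ i, f i = ∑ j : ZMod n, (f (2 * j.val : ℕ) + f ((2 * j.val : ℕ) + 1)) := by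
  rw [ZMod.sum_univ_eq_sum_range, ZMod.sum_univ_eq_sum_range, Finset.sum_range_two_mul]
  refine Finset.sum_congr rfl fun j hj => ?_
  rw [ZMod.val_cast_of_lt (Finset.mem_range.mp hj), Nat.cast_succ]

lemma ZMod.natCast_two_mul_val_add_one {n : ℕ} [NeZero n] (j : ZMod n) :
    ((2 * (j + 1).val : ℕ) : ZMod (2 * n)) = ((2 * j.val : ℕ) : ZMod (2 * n)) + 1 + 1 := by
  have h : (j + 1).val ≡ j.val + 1 [MOD n] := by
    rw [← ZMod.natCast_eq_natCast_iff]
    push_cast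
    simp only [ZMod.natCast_zmod_val]
  rw [(ZMod.natCast_eq_natCast_iff _ _ _).mpr (h.mul_left' 2)]
  push_cast
  ring

namespace GKMPaper

lemma coe_angTo (ε : Bool) (w w' : ℂ) : (angTo ε w w' : Angle) = ((w' / w).arg : Angle) := by
  unfold angTo
  cases ε <;> split_ifs <;> simp [Angle.coe_add, Angle.coe_sub, Angle.coe_two_pi]

lemma angTo_true_mem_Ico (w w' : ℂ) : angTo true w w' ∈ Set.Ico 0 (2 * π) := by
  have := (w' / w).neg_pi_lt_arg
  have := (w' / w).arg_le_pi
  rw [angTo, if_pos rfl]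
  constructor <;> split_ifs <;> linarith [pi_pos]

lemma angTo_false_mem_Ioc (w w' : ℂ) : angTo false w w' ∈ Set.Ioc (-(2 * π)) 0 := by
  have := (w' / w).neg_pi_lt_arg
  have := (w' / w).arg_le_pi
  rw [angTo, if_neg Bool.false_ne_true]
  constructor <;> split_ifs <;> linarith [pi_pos]

lemma angTo_zero_left (ε : Bool) (w : ℂ) : angTo ε 0 w = 0 := by
  cases ε <;> simp [angTo]

lemma angTo_zero_right (ε : Bool) (w : ℂ) : angTo ε w 0 = 0 := by
  cases ε <;> simp [angTo]

lemma angTo_add {ε : Bool} {z₁ z₂ z₃ : ℂ} (h₁₂ : angTo ε z₁ z₂ ≠ 0) (h₂₃ : angTo ε z₂ z₃ ≠ 0)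
    (hlt : |angTo ε z₁ z₃ - (angTo ε z₁ z₂ + angTo ε z₂ z₃)| < 2 * π) :
    angTo ε z₁ z₃ = angTo ε z₁ z₂ + angTo ε z₂ z₃ := by
  have hz₁ : z₁ ≠ 0 := by rintro rfl; exact h₁₂ (angTo_zero_left ε z₂)
  have hz₂ : z₂ ≠ 0 := by rintro rfl; exact h₂₃ (angTo_zero_left ε z₃)
  have hz₃ : z₃ ≠ 0 := by rintro rfl; exact h₂₃ (angTo_zero_right ε z₂)
  refine Angle.eq_of_coe_eq_of_abs_sub_lt ?_ hlt
  rw [Angle.coe_add, coe_angTo, coe_angTo, coe_angTo,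
    ← Complex.arg_mul_coe_angle (div_ne_zero hz₂ hz₁) (div_ne_zero hz₃ hz₂)]
  congr 3
  field_simp

lemma Preferred.abs_angTo_add {n : ℕ} {w : ZMod n → ℂ} {ε : Bool} (h : Preferred w ε)
    (i : ZMod n) :
    |angTo ε (w i) (w (i + 1 + 1))| =
      |angTo ε (w i) (w (i + 1))| + |angTo ε (w (i + 1)) (w (i + 1 + 1))| := by
  rcases h with ⟨rfl, h⟩ | ⟨rfl, h⟩
  · obtain ⟨h₁₂, h₁₂π⟩ := h i
    obtain ⟨h₂₃, h₂₃π⟩ := h (i + 1)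
    obtain ⟨h₁₃, h₁₃π⟩ := angTo_true_mem_Ico (w i) (w (i + 1 + 1))
    rw [angTo_add h₁₂.ne' h₂₃.ne' (abs_sub_lt_iff.mpr ⟨by linarith, by linarith⟩),
      abs_of_pos h₁₂, abs_of_pos h₂₃, abs_of_pos (add_pos h₁₂ h₂₃)]
  · obtain ⟨h₁₂π, h₁₂⟩ := h i
    obtain ⟨h₂₃π, h₂₃⟩ := h (i + 1)
    obtain ⟨h₁₃π, h₁₃⟩ := angTo_false_mem_Ioc (w i) (w (i + 1 + 1))
    rw [angTo_add h₁₂.ne h₂₃.ne (abs_sub_lt_iff.mpr ⟨by linarith, by linarith⟩),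
      abs_of_neg h₁₂, abs_of_neg h₂₃, abs_of_neg (add_neg h₁₂ h₂₃), neg_add]

theorem statement13_general (mh : ℕ) [NeZero mh] [NeZero (2 * mh)]
    (w : ZMod (2 * mh) → ℂ)
    (ε : Bool) (hpref : Preferred w ε) :
    winding (fun j : ZMod mh => w (((2 * j.val : ℕ) : ZMod (2 * mh)))) ε =
      winding w ε := by
  unfold winding
  rw [ZMod.sum_two_mul (fun i => |angTo ε (w i) (w (i + 1))|)]
  congr 1
  refine Finset.sum_congr rfl fun j _ => ?_
  dsimp only
  rw [ZMod.natCast_two_mul_val_add_one, hpref.abs_angTo_add]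

/-- for a locally convex sequence of even length with preferred
orientation `ε`, the winding number of the subsequence of odd-position entries
equals that of the full sequence. -/
theorem statement13 (mh : ℕ) [NeZero mh] [NeZero (2 * mh)]
    (w : ZMod (2 * mh) → ℂ) (hw : ∀ i, w i ≠ 0)
    (ε : Bool) (hpref : Preferred w ε) :
    winding (fun j : ZMod mh => w (((2 * j.val : ℕ) : ZMod (2 * mh)))) ε =
      winding w ε :=
  statement13_general mh w ε hpref

end GKMPaper
end
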